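/- arXiv:2102.11924 — 8 statements merged into one kernel-verified Lean document; each statement's English description precedes it below -/
import Mathlib

section
/- Let F be a finite confluence. A subset C ⊆ F is the range of a closure operator on F if and only if C is closed under local meet, i.e., for every t ∈ F, C ∩ F^t is closed under the meet operation of the lattice F^t (in particular the top element of F^t lies in C). In that case the closure operator is given by f(t) = the meet, in F^t, of all elements of C ∩ F^t. -/
/-!
A closure operator `c` is recovered from its range `C`: `c t` is the least element of `C ∩ F^t`.
The range is closed under every meet `m` that exists in some `F^t`, since `c m` is again a lower
bound of the same elements. Conversely, in a finite confluence `F^t` is directed, so it has a top,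
which lies in `C`; closure under local meet makes `C ∩ F^t` downward directed, so being finite and
nonempty it has a least element, and sending `t` to it is a closure operator with range `C`.
-/

section

open Set

variable {α : Type*}

theorem Set.Finite.exists_isLeast_of_directedOn [Preorder α] {s : Set α} (hs : s.Finite)
    (hne : s.Nonempty) (hd : DirectedOn (· ≥ ·) s) : ∃ m, IsLeast s m :=
  let ⟨m, hm⟩ := hs.exists_minimal hne
  ⟨m, hd.minimal_iff_isLeast.1 hm⟩

theorem Set.Finite.exists_isGreatest_of_directedOn [Preorder α] {s : Set α} (hs : s.Finite)
    (hne : s.Nonempty) (hd : DirectedOn (· ≤ ·) s) : ∃ m, IsGreatest s m :=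
  let ⟨m, hm⟩ := hs.exists_maximal hne
  ⟨m, hd.maximal_iff_isGreatest.1 hm⟩

theorem IsLeast.isGreatest_lowerBounds_inter_Ici [Preorder α] {C : Set α} {t a : α}
    (ha : IsLeast (C ∩ Ici t) a) : IsGreatest {z | t ≤ z ∧ ∀ c ∈ C, t ≤ c → z ≤ c} a :=
  ⟨⟨ha.1.2, fun _ hc htc => ha.2 ⟨hc, htc⟩⟩, fun _ hz => hz.2 a ha.1.1 ha.1.2⟩

theorem exists_isLeast_inter_Ici_of_directedOn [Preorder α] [Finite α] {C : Set α}
    (hup : ∀ t : α, DirectedOn (· ≤ ·) (Ici t)) (htop : ∀ t T : α, IsGreatest (Ici t) T → T ∈ C)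
    (hdown : ∀ t : α, DirectedOn (· ≥ ·) (C ∩ Ici t)) (t : α) : ∃ m, IsLeast (C ∩ Ici t) m := by
  obtain ⟨T, hT⟩ := (toFinite (Ici t)).exists_isGreatest_of_directedOn nonempty_Ici (hup t)
  exact (toFinite _).exists_isLeast_of_directedOn ⟨T, htop t T hT, hT.1⟩ (hdown t)

namespace ClosureOperator

theorem isLeast_range_inter_Ici [Preorder α] (c : ClosureOperator α) (t : α) :
    IsLeast (range c ∩ Ici t) (c t) := by
  refine ⟨⟨mem_range_self t, c.le_closure t⟩, ?_⟩
  rintro _ ⟨⟨y, rfl⟩, hty⟩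
  exact c.le_closure_iff.1 hty

variable [PartialOrder α]

theorem mem_range_of_isGreatest (c : ClosureOperator α) {S : Set α} {m : α}
    (hS : ∀ z ∈ S, c z ∈ S) (hm : IsGreatest S m) : m ∈ range c :=
  ⟨m, (hm.2 (hS m hm.1)).antisymm (c.le_closure m)⟩

theorem exists_range_eq_of_forall_isLeast {C : Set α} (h : ∀ t, ∃ m, IsLeast (C ∩ Ici t) m) :
    ∃ c : ClosureOperator α, range c = C := by
  choose f hf using h
  exact ⟨ofPred f (· ∈ C) (fun t => (hf t).1.2) (fun t => (hf t).1.1)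
    (fun t _ hty hy => (hf t).2 ⟨hy, hty⟩), setOfPred_isClosed_eq_range_closure.symm⟩

theorem exists_range_eq_iff {C : Set α} :
    (∃ c : ClosureOperator α, range c = C) ↔
      ∃ f : α → α, Monotone f ∧ (∀ x, f (f x) = f x) ∧ (∀ x, x ≤ f x) ∧ range f = C :=
  ⟨fun ⟨c, hc⟩ => ⟨c, c.monotone, c.idempotent, c.le_closure, hc⟩,
    fun ⟨f, hmono, hidem, hext, hf⟩ => ⟨mk' f hmono hext fun x => (hidem x).le, hf⟩⟩

end ClosureOperator

end

/-- In a finite confluence, a subset is the range of a closure operator iff it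
is closed under local meet; the closure operator then sends `t` to the meet in
`F^t` of all elements of `C ∩ F^t`. -/
theorem closure_subset_iff_closed_under_local_meet
    {F : Type*} [PartialOrder F] [Finite F]
    (hconf : ∀ t x y : F, t ≤ x → t ≤ y →
      (∃ m, IsGreatest {z | t ≤ z ∧ z ≤ x ∧ z ≤ y} m) ∧
      (∃ j, IsLeast {z | t ≤ z ∧ x ≤ z ∧ y ≤ z} j))
    (C : Set F) :
    ((∃ f : F → F, Monotone f ∧ (∀ x, f (f x) = f x) ∧ (∀ x, x ≤ f x) ∧
        Set.range f = C) ↔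
      ((∀ t : F, ∀ T : F, IsGreatest {z | t ≤ z} T → T ∈ C) ∧
       (∀ t : F, ∀ x ∈ C, ∀ y ∈ C, t ≤ x → t ≤ y →
        ∀ m, IsGreatest {z | t ≤ z ∧ z ≤ x ∧ z ≤ y} m → m ∈ C))) ∧
    (∀ f : F → F, Monotone f → (∀ x, f (f x) = f x) → (∀ x, x ≤ f x) →
      Set.range f = C → ∀ t : F,
        IsGreatest {z | t ≤ z ∧ ∀ c ∈ C, t ≤ c → z ≤ c} (f t)) := by
  refine ⟨ClosureOperator.exists_range_eq_iff.symm.trans ⟨?_, fun ⟨htop, hmeet⟩ => ?_⟩, ?_⟩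
  · rintro ⟨c, rfl⟩
    refine ⟨fun t T hT => c.mem_range_of_isGreatest (fun z hz => hz.trans (c.le_closure z)) hT, ?_⟩
    rintro t _ ⟨x, rfl⟩ _ ⟨y, rfl⟩ - - m hm
    refine c.mem_range_of_isGreatest ?_ hm
    rintro z ⟨htz, hzx, hzy⟩
    exact ⟨htz.trans (c.le_closure z), c.le_closure_iff.1 hzx, c.le_closure_iff.1 hzy⟩
  · refine ClosureOperator.exists_range_eq_of_forall_isLeast <|
      exists_isLeast_inter_Ici_of_directedOn (fun t x hx y hy => ?_) htop fun t x hx y hy => ?_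
    · obtain ⟨j, ⟨htj, hxj, hyj⟩, -⟩ := (hconf t x y hx hy).2
      exact ⟨j, htj, hxj, hyj⟩
    · obtain ⟨m, hm⟩ := (hconf t x y hx.2 hy.2).1
      exact ⟨m, ⟨hmeet t x hx.1 y hy.1 hx.2 hy.2 m hm, hm.1.1⟩, hm.1.2.1, hm.1.2.2⟩
  · intro f hmono hidem hext hrange t
    have hleast : IsLeast (C ∩ Set.Ici t) (f t) :=
      hrange ▸ (ClosureOperator.mk' f hmono hext fun x => (hidem x).le).isLeast_range_inter_Ici t
    exact hleast.isGreatest_lowerBounds_inter_Ici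
end

section
/- Let T be a finite lattice and F ⊆ T. The following are equivalent: (1) F with the induced order is a confluence whose local join operation coincides with the join of T; (2) for every t ∈ F, the set F^t = {q ∈ F | q ≥ t} is closed under the join of T and contains a greatest element below every x ∈ T with x ≥ t (i.e., F^t is the range of an interior operator p_t on T^t given by p_t(x) = ⋁{q ∈ F | t ≤ q ≤ x}); (3) for all x, y, t ∈ F with x ≥ t and y ≥ t, the join x ∨ y (computed in T) belongs to F. -/
/-!
All three conditions reduce to (3), closure of `F` under joins of pairs with a common lower
bound in `F`. The only non-formal direction is the existence of the greatest elements required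
by (1) and (2): under (3) the set `{q ∈ F | t ≤ q ≤ x}` is join-closed and contains `t`, and a
finite nonempty join-closed set has a greatest element, the join of all its elements. The local
meet of `x, y` in `F^t` is the case `x ⊓ y`.
-/

lemma SupClosed.exists_isGreatest {α : Type*} [SemilatticeSup α] {s : Set α}
    (hs : SupClosed s) (hfin : s.Finite) (hne : s.Nonempty) : ∃ m, IsGreatest s m := by
  have hne' : hfin.toFinset.Nonempty := hfin.toFinset_nonempty.mpr hne
  refine ⟨hfin.toFinset.sup' hne' id, ?_, fun a ha => ?_⟩
  · exact hs.finsetSup'_mem hne' fun a ha => hfin.mem_toFinset.mp ha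
  · exact Finset.le_sup' id (hfin.mem_toFinset.mpr ha)

lemma isLeast_sup_of_mem {α : Type*} [SemilatticeSup α] {F : Set α} {x y : α}
    (h : x ⊔ y ∈ F) : IsLeast {z | z ∈ F ∧ x ≤ z ∧ y ≤ z} (x ⊔ y) :=
  ⟨⟨h, le_sup_left, le_sup_right⟩, fun _ hz => sup_le hz.2.1 hz.2.2⟩

section FiniteLattice

variable {T : Type*} [Lattice T] [Finite T] {F : Set T} {t x y : T}

lemma exists_isGreatest_mem_le
    (hF : ∀ x ∈ F, ∀ y ∈ F, ∀ t ∈ F, t ≤ x → t ≤ y → x ⊔ y ∈ F) (ht : t ∈ F) (htx : t ≤ x) :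
    ∃ m, IsGreatest {q | q ∈ F ∧ t ≤ q ∧ q ≤ x} m := by
  have hsup : SupClosed {q | q ∈ F ∧ t ≤ q ∧ q ≤ x} := fun a ha b hb =>
    ⟨hF a ha.1 b hb.1 t ht ha.2.1 hb.2.1, le_sup_of_le_left ha.2.1, sup_le ha.2.2 hb.2.2⟩
  exact hsup.exists_isGreatest (Set.toFinite _) ⟨t, ht, le_rfl, htx⟩

lemma exists_mem_isGreatest_mem_le_and_le
    (hF : ∀ x ∈ F, ∀ y ∈ F, ∀ t ∈ F, t ≤ x → t ≤ y → x ⊔ y ∈ F) (ht : t ∈ F)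
    (htx : t ≤ x) (hty : t ≤ y) :
    ∃ m, m ∈ F ∧ IsGreatest {z | z ∈ F ∧ t ≤ z ∧ z ≤ x ∧ z ≤ y} m := by
  obtain ⟨m, hm⟩ := exists_isGreatest_mem_le hF ht (le_inf htx hty)
  simp only [le_inf_iff] at hm
  exact ⟨m, hm.1.1, hm⟩

end FiniteLattice

/-- Characterizations of subconfluences of a finite lattice: `F` is a
confluence with the join of `T` as local join, iff each `F^t` is the range of
an interior operator on `T^t`, iff `F` is closed under joins of pairs having a
common lower bound in `F`. -/
theorem subconfluence_characterizations
    {T : Type*} [Lattice T] [Finite T] (F : Set T) :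
    ((∀ t ∈ F, ∀ x ∈ F, ∀ y ∈ F, t ≤ x → t ≤ y →
        (∃ m, m ∈ F ∧ IsGreatest {z | z ∈ F ∧ t ≤ z ∧ z ≤ x ∧ z ≤ y} m) ∧
        x ⊔ y ∈ F ∧ IsLeast {z | z ∈ F ∧ x ≤ z ∧ y ≤ z} (x ⊔ y)) ↔
      (∀ x ∈ F, ∀ y ∈ F, ∀ t ∈ F, t ≤ x → t ≤ y → x ⊔ y ∈ F)) ∧
    ((∀ t ∈ F, (∀ x ∈ F, ∀ y ∈ F, t ≤ x → t ≤ y → x ⊔ y ∈ F) ∧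
        (∀ x : T, t ≤ x → ∃ m, IsGreatest {q | q ∈ F ∧ t ≤ q ∧ q ≤ x} m)) ↔
      (∀ x ∈ F, ∀ y ∈ F, ∀ t ∈ F, t ≤ x → t ≤ y → x ⊔ y ∈ F)) := by
  refine ⟨⟨fun h x hx y hy t ht htx hty => (h t ht x hx y hy htx hty).2.1, ?_⟩,
    ⟨fun h x hx y hy t ht htx hty => (h t ht).1 x hx y hy htx hty, ?_⟩⟩
  · intro hF t ht x hx y hy htx hty
    have hxy : x ⊔ y ∈ F := hF x hx y hy t ht htx hty
    exact ⟨exists_mem_isGreatest_mem_le_and_le hF ht htx hty, hxy, isLeast_sup_of_mem hxy⟩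
  · intro hF t ht
    exact ⟨fun x hx y hy htx hty => hF x hx y hy t ht htx hty,
      fun x htx => exists_isGreatest_mem_le hF ht htx⟩
end

section
/- Let T be a finite lattice, F a subconfluence of T, and for each t ∈ F let p_t : T^t → T^t be defined by p_t(x) = ⋁{q ∈ F | t ≤ q ≤ x}. If q, t ∈ F with q ≤ t, then for every x ∈ T with x ≥ t, p_t(x) = p_q(x). -/
/-- For a subconfluence `F` of a finite lattice and `q ≤ t` in `F`, the
interior operators `p_t` and `p_q` agree on elements above `t`. -/
theorem interior_operators_agree
    {T : Type*} [Lattice T] [Finite T] (F : Set T)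
    (hF : ∀ x ∈ F, ∀ y ∈ F, ∀ t ∈ F, t ≤ x → t ≤ y → x ⊔ y ∈ F)
    (q t : T) (hq : q ∈ F) (ht : t ∈ F) (hqt : q ≤ t)
    (x : T) (hx : t ≤ x) :
    ∀ a b : T, IsGreatest {z | z ∈ F ∧ t ≤ z ∧ z ≤ x} a →
      IsGreatest {z | z ∈ F ∧ q ≤ z ∧ z ≤ x} b → a = b := by
  rintro a b ⟨⟨haF, hta, hax⟩, ha⟩ ⟨⟨hbF, hqb, hbx⟩, hb⟩
  have hab : a ≤ b := hb ⟨haF, hqt.trans hta, hax⟩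
  have hsup : a ⊔ b ∈ F := hF a haF b hbF q hq (hqt.trans hta) hqb
  have : a ⊔ b ≤ a := ha ⟨hsup, hta.trans le_sup_left, sup_le hax hbx⟩
  exact le_antisymm hab (le_sup_right.trans this)
end

section
/- Let T be a finite lattice, F a subconfluence of T, f a closure operator on T, and for each t ∈ F let p_t(x) = ⋁{q ∈ F | t ≤ q ≤ x} for x ∈ T^t. Then the map f_F : F → F defined by f_F(t) = p_t(f(t)) is a closure operator on F. -/
/-- For a subconfluence `F` of a finite lattice `T` and a closure operator `f`
on `T`, the map `t ↦ p_t (f t)` is a closure operator on `F`. -/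
theorem interior_comp_closure_is_closure_on_subconfluence
    {T : Type*} [Lattice T] [Finite T] (F : Set T)
    (hF : ∀ x ∈ F, ∀ y ∈ F, ∀ t ∈ F, t ≤ x → t ≤ y → x ⊔ y ∈ F)
    (f : T → T)
    (hfm : Monotone f) (hfi : ∀ x, f (f x) = f x) (hfe : ∀ x, x ≤ f x)
    (P : T → T → T)
    (hP : ∀ t ∈ F, ∀ x : T, t ≤ x →
      IsGreatest {q | q ∈ F ∧ t ≤ q ∧ q ≤ x} (P t x)) :
    (∀ t ∈ F, P t (f t) ∈ F) ∧
    (∀ t ∈ F, t ≤ P t (f t)) ∧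
    (∀ t ∈ F, ∀ s ∈ F, t ≤ s → P t (f t) ≤ P s (f s)) ∧
    (∀ t ∈ F, P (P t (f t)) (f (P t (f t))) = P t (f t)) := by
  have key : ∀ t ∈ F, (P t (f t)) ∈ F ∧ t ≤ P t (f t) ∧ P t (f t) ≤ f t := by
    intro t ht
    obtain ⟨⟨h1, h2, h3⟩, _⟩ := hP t ht (f t) (hfe t)
    exact ⟨h1, h2, h3⟩
  refine ⟨fun t ht => (key t ht).1, fun t ht => (key t ht).2.1, ?_, ?_⟩
  · intro t ht s hs hts
    obtain ⟨haF, hta, haf⟩ := key t ht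
    obtain ⟨_, hub⟩ := hP s hs (f s) (hfe s)
    have hmem : P t (f t) ⊔ s ∈ F := hF _ haF s hs t ht hta hts
    have : P t (f t) ⊔ s ≤ P s (f s) :=
      hub ⟨hmem, le_sup_right, sup_le (haf.trans (hfm hts)) (hfe s)⟩
    exact le_sup_left.trans this
  · intro t ht
    set a := P t (f t) with ha
    obtain ⟨haF, hta, haf⟩ := key t ht
    obtain ⟨⟨_, h2, h3⟩, _⟩ := hP a haF (f a) (hfe a)
    obtain ⟨_, hub⟩ := hP t ht (f t) (hfe t)
    have hle : P a (f a) ≤ a := by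
      apply hub
      refine ⟨(hP a haF (f a) (hfe a)).1.1, hta.trans h2, ?_⟩
      calc P a (f a) ≤ f a := h3
        _ ≤ f (f t) := hfm haf
        _ = f t := hfi t
    exact le_antisymm hle h2
end

section
/- Let (i, e) be a Galois connection between finite lattices X and L, F a subconfluence of L, and for each t ∈ F let p_t(x) = ⋁{q ∈ F | t ≤ q ≤ x}. Then the map f : F → F defined by f(t) = p_t(i(e(t))) is a closure operator on F. -/
/-- Given a Galois connection `(i, e)` between finite lattices and a
subconfluence `F` of `L`, the map `t ↦ p_t (i (e t))` is a closure operator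
on `F`. -/
theorem support_closure_on_subconfluence
    {X L : Type*} [Lattice X] [Finite X] [Lattice L] [Finite L]
    (i : X → L) (e : L → X)
    (hi : ∀ x x' : X, x ≤ x' → i x' ≤ i x)
    (he : ∀ l l' : L, l ≤ l' → e l' ≤ e l)
    (hei : ∀ x : X, x ≤ e (i x))
    (hie : ∀ l : L, l ≤ i (e l))
    (F : Set L)
    (hF : ∀ x ∈ F, ∀ y ∈ F, ∀ t ∈ F, t ≤ x → t ≤ y → x ⊔ y ∈ F)
    (P : L → L → L)
    (hP : ∀ t ∈ F, ∀ x : L, t ≤ x →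
      IsGreatest {q | q ∈ F ∧ t ≤ q ∧ q ≤ x} (P t x)) :
    (∀ t ∈ F, P t (i (e t)) ∈ F) ∧
    (∀ t ∈ F, t ≤ P t (i (e t))) ∧
    (∀ t ∈ F, ∀ s ∈ F, t ≤ s → P t (i (e t)) ≤ P s (i (e s))) ∧
    (∀ t ∈ F, P (P t (i (e t))) (i (e (P t (i (e t))))) = P t (i (e t))) := by
  have key : ∀ t ∈ F, (P t (i (e t)) ∈ F) ∧ t ≤ P t (i (e t)) ∧ P t (i (e t)) ≤ i (e t) := by
    intro t ht
    obtain ⟨⟨h1, h2, h3⟩, -⟩ := hP t ht (i (e t)) (hie t)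
    exact ⟨h1, h2, h3⟩
  refine ⟨fun t ht => (key t ht).1, fun t ht => (key t ht).2.1, ?_, ?_⟩
  · intro t ht s hs hts
    obtain ⟨h1, h2, h3⟩ := key t ht
    have hsub : P t (i (e t)) ⊔ s ∈ F := hF _ h1 s hs t ht h2 hts
    have hle : P t (i (e t)) ⊔ s ≤ i (e s) :=
      sup_le (h3.trans (hi _ _ (he _ _ hts))) (hie s)
    have h := (hP s hs (i (e s)) (hie s)).2 ⟨hsub, le_sup_right, hle⟩
    exact le_trans le_sup_left h
  · intro t ht
    obtain ⟨h1, h2, h3⟩ := key t ht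
    obtain ⟨h1', h2', h3'⟩ := key _ h1
    apply le_antisymm _ h2'
    have hmem : P (P t (i (e t))) (i (e (P t (i (e t))))) ∈
        {q | q ∈ F ∧ t ≤ q ∧ q ≤ i (e t)} := by
      refine ⟨h1', h2.trans h2', h3'.trans ?_⟩
      exact (hi _ _ (he _ _ h3)).trans (hi _ _ (hei (e t)))
    exact (hP t ht (i (e t)) (hie t)).2 hmem
end

section
/- Let (i, e) be a Galois connection between finite lattices X and L, and F a subconfluence of L. Then e[F] = ⋃_{t ∈ F} (e ∘ p_t ∘ i)[X_{e(t)}] = ⋃_{m ∈ min(F)} (e ∘ p_m ∘ i)[X_{e(m)}], where X_{e(t)} = {x ∈ X | x ≤ e(t)}, p_t(x) = ⋁{q ∈ F | t ≤ q ≤ x}, and min(F) is the set of minimal elements of F. -/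
/-- For a Galois connection `(i, e)` between finite lattices and a
subconfluence `F` of `L`, `e[F]` is the union over `t ∈ F` (and it suffices to
take minimal `t`) of the ranges of the local closure operators
`e ∘ p_t ∘ i` on `X_{e(t)}`. -/
theorem image_eq_union_local_closures
    {X L : Type*} [Lattice X] [Finite X] [Lattice L] [Finite L]
    (i : X → L) (e : L → X)
    (hi : ∀ x x' : X, x ≤ x' → i x' ≤ i x)
    (he : ∀ l l' : L, l ≤ l' → e l' ≤ e l)
    (hei : ∀ x : X, x ≤ e (i x))
    (hie : ∀ l : L, l ≤ i (e l))
    (F : Set L)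
    (hF : ∀ x ∈ F, ∀ y ∈ F, ∀ t ∈ F, t ≤ x → t ≤ y → x ⊔ y ∈ F)
    (P : L → L → L)
    (hP : ∀ t ∈ F, ∀ x : L, t ≤ x →
      IsGreatest {q | q ∈ F ∧ t ≤ q ∧ q ≤ x} (P t x)) :
    (e '' F = {y | ∃ t ∈ F, ∃ x : X, x ≤ e t ∧ y = e (P t (i x))}) ∧
    (e '' F = {y | ∃ m ∈ F, (∀ x ∈ F, x ≤ m → x = m) ∧
      ∃ x : X, x ≤ e m ∧ y = e (P m (i x))}) := by
  -- membership of P in the image set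
  have key : ∀ t ∈ F, ∀ x : X, x ≤ e t → t ≤ i x ∧ e (P t (i x)) ∈ e '' F := by
    intro t ht x hx
    have htix : t ≤ i x := le_trans (hie t) (hi x (e t) hx)
    obtain ⟨⟨hPF, _, _⟩, _⟩ := hP t ht (i x) htix
    exact ⟨htix, ⟨P t (i x), hPF, rfl⟩⟩
  have hS1 : e '' F = {y | ∃ t ∈ F, ∃ x : X, x ≤ e t ∧ y = e (P t (i x))} := by
    ext y
    constructor
    · rintro ⟨q, hq, rfl⟩
      refine ⟨q, hq, e q, le_rfl, ?_⟩
      obtain ⟨⟨hPF, hqP, hPle⟩, _⟩ := hP q hq (i (e q)) (hie q)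
      exact le_antisymm (le_trans (hei (e q)) (he _ _ hPle)) (he _ _ hqP)
    · rintro ⟨t, ht, x, hx, rfl⟩
      exact (key t ht x hx).2
  refine ⟨hS1, ?_⟩
  ext y
  constructor
  · intro hy
    rw [hS1] at hy
    obtain ⟨t, ht, x, hx, rfl⟩ := hy
    -- find a minimal element m of F below t
    obtain ⟨m, ⟨hmF, hmt⟩, hmin⟩ :=
      (Finite.to_wellFoundedLT (α := L)).wf.has_min {z | z ∈ F ∧ z ≤ t} ⟨t, ht, le_rfl⟩
    have hxm : x ≤ e m := le_trans hx (he m t hmt)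
    refine ⟨m, hmF, fun z hz hzm => by
      by_contra hne
      exact hmin z ⟨hz, le_trans hzm hmt⟩ (lt_of_le_of_ne hzm hne), x, hxm, ?_⟩
    -- show P t (i x) = P m (i x)
    obtain ⟨htix, _⟩ := key t ht x hx
    obtain ⟨hmix, _⟩ := key m hmF x hxm
    obtain ⟨⟨hPtF, htPt, hPtle⟩, hmaxt⟩ := hP t ht (i x) htix
    obtain ⟨⟨hPmF, hmPm, hPmle⟩, hmaxm⟩ := hP m hmF (i x) hmix
    have h1 : P t (i x) ≤ P m (i x) :=
      hmaxm ⟨hPtF, le_trans hmt htPt, hPtle⟩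
    have hjoin : P m (i x) ⊔ t ∈ F := hF _ hPmF _ ht _ hmF hmPm hmt
    have h2 : P m (i x) ≤ P t (i x) :=
      le_trans le_sup_left (hmaxt ⟨hjoin, le_sup_right,
        sup_le hPmle (le_trans (hie t) (hi x (e t) hx))⟩)
    rw [le_antisymm h1 h2]
  · rintro ⟨m, hm, _, x, hx, rfl⟩
    exact (key m hm x hx).2
end

section
/- Let L be a finite lattice and F ⊆ L that is not a subconfluence of L, i.e., there exist t, x, y ∈ F with x ≥ t, y ≥ t, and x ∨ y ∉ F. Then no monotone map f : F → F can satisfy f(x) = x, f(y) = y, and f(t) ∈ {x, y} with f(t) ≥ t. -/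
/-- If `F ⊆ L` is not a subconfluence (witnessed by `t ≤ x, y` in `F` with
`x ⊔ y ∉ F`), then no support-closure operator on `F` exists for the dataset
consisting of the single object described by `x ⊔ y`. -/
theorem no_support_closure_without_subconfluence
    {L : Type*} [Lattice L] (F : Set L)
    (t x y : L) (ht : t ∈ F) (hx : x ∈ F) (hy : y ∈ F)
    (htx : t ≤ x) (hty : t ≤ y) (hxy : x ⊔ y ∉ F) :
    ¬ ∃ f : L → L,
      (∀ a ∈ F, ∀ b ∈ F, a ≤ b → f a ≤ f b) ∧
      f x = x ∧ f y = y ∧ (f t = x ∨ f t = y) ∧ t ≤ f t := by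
  rintro ⟨f, mono, hfx, hfy, hft, -⟩
  rcases hft with h | h
  · have : f t ≤ f y := mono t ht y hy hty
    rw [h, hfy] at this
    exact hxy (by rwa [sup_eq_right.mpr this])
  · have : f t ≤ f x := mono t ht x hx htx
    rw [h, hfx] at this
    exact hxy (by rwa [sup_eq_left.mpr this])
end

section
/- Let L be a finite lattice and F a subconfluence of L. Then for every subset O of objects described by d : O → L, the support-closure operator exists on F: the map f(t) = p_t(⋀_{o ∈ ext(t)} d(o)) is a closure operator on F, and for each t ∈ F, f(t) is the greatest element of F above t with the same support set as t, i.e., ext(f(t)) = ext(t) and f(t) is maximal among {q ∈ F | q ≥ t, ext(q) = ext(t)}. -/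
/-- For a subconfluence `F` of a finite lattice `L` and any dataset
`d : O → L`, the support closure operator exists on `F`: the map
`t ↦ p_t (⋀_{o ∈ ext t} d o)` is a closure operator on `F`, and `f t` is the
greatest element of `F` above `t` with the same support set as `t`. -/
theorem support_closure_exists_on_subconfluence
    {L : Type*} [CompleteLattice L] [Finite L] {O : Type*} [Finite O]
    (F : Set L)
    (hF : ∀ x ∈ F, ∀ y ∈ F, ∀ t ∈ F, t ≤ x → t ≤ y → x ⊔ y ∈ F)
    (d : O → L)
    (P : L → L → L)
    (hP : ∀ t ∈ F, ∀ x : L, t ≤ x →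
      IsGreatest {q | q ∈ F ∧ t ≤ q ∧ q ≤ x} (P t x)) :
    (∀ t ∈ F, P t (⨅ o ∈ {o : O | t ≤ d o}, d o) ∈ F) ∧
    (∀ t ∈ F, t ≤ P t (⨅ o ∈ {o : O | t ≤ d o}, d o)) ∧
    (∀ t ∈ F, ∀ s ∈ F, t ≤ s →
      P t (⨅ o ∈ {o : O | t ≤ d o}, d o) ≤
        P s (⨅ o ∈ {o : O | s ≤ d o}, d o)) ∧
    (∀ t ∈ F,
      P (P t (⨅ o ∈ {o : O | t ≤ d o}, d o))
        (⨅ o ∈ {o : O | P t (⨅ o' ∈ {o' : O | t ≤ d o'}, d o') ≤ d o}, d o) =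
      P t (⨅ o ∈ {o : O | t ≤ d o}, d o)) ∧
    (∀ t ∈ F,
      {o : O | P t (⨅ o' ∈ {o' : O | t ≤ d o'}, d o') ≤ d o} =
        {o : O | t ≤ d o}) ∧
    (∀ t ∈ F, ∀ q ∈ F, t ≤ q →
      {o : O | q ≤ d o} = {o : O | t ≤ d o} →
      q ≤ P t (⨅ o ∈ {o : O | t ≤ d o}, d o)) := by
  set m : L → L := fun t => ⨅ o ∈ {o : O | t ≤ d o}, d o with hm
  have hle : ∀ t : L, t ≤ m t := fun t =>
    le_iInf₂ fun o ho => ho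
  have hPt : ∀ t ∈ F, (P t (m t) ∈ F ∧ t ≤ P t (m t) ∧ P t (m t) ≤ m t) ∧
      ∀ q, q ∈ F → t ≤ q → q ≤ m t → q ≤ P t (m t) := by
    intro t ht
    obtain ⟨h1, h2⟩ := hP t ht (m t) (hle t)
    exact ⟨h1, fun q hq ha hb => h2 ⟨hq, ha, hb⟩⟩
  -- ext (P t (m t)) = ext t
  have hext : ∀ t ∈ F, {o : O | P t (m t) ≤ d o} = {o : O | t ≤ d o} := by
    intro t ht
    obtain ⟨⟨hmem, htle, hlem⟩, _⟩ := hPt t ht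
    ext o
    constructor
    · intro h; exact htle.trans h
    · intro h
      exact hlem.trans (iInf₂_le o h)
  have hmono : ∀ t ∈ F, ∀ s ∈ F, t ≤ s → P t (m t) ≤ P s (m s) := by
    intro t ht s hs hts
    obtain ⟨⟨hmem, htle, hlem⟩, _⟩ := hPt t ht
    obtain ⟨_, hmax⟩ := hPt s hs
    have hsup : P t (m t) ⊔ s ∈ F := hF _ hmem _ hs _ ht htle hts
    have hle2 : P t (m t) ⊔ s ≤ m s := by
      apply sup_le _ (hle s)
      exact le_iInf₂ fun o ho => hlem.trans (iInf₂_le o (hts.trans ho))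
    have := hmax _ hsup le_sup_right hle2
    exact le_sup_left.trans this
  have hmax' : ∀ t ∈ F, ∀ q ∈ F, t ≤ q →
      {o : O | q ≤ d o} = {o : O | t ≤ d o} → q ≤ P t (m t) := by
    intro t ht q hq htq hext'
    obtain ⟨_, hmax⟩ := hPt t ht
    refine hmax q hq htq (le_iInf₂ fun o ho => ?_)
    have : o ∈ {o : O | q ≤ d o} := hext' ▸ ho
    exact this
  refine ⟨fun t ht => (hPt t ht).1.1, fun t ht => (hPt t ht).1.2.1, hmono,
    ?_, hext, hmax'⟩
  intro t ht
  obtain ⟨⟨hmem, htle, hlem⟩, hmax⟩ := hPt t ht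
  have he := hext t ht
  have hmeq : m (P t (m t)) = m t := by
    simp only [hm]; rw [he]
  have h1 : P (P t (m t)) (m (P t (m t))) ≤ P t (m t) := by
    obtain ⟨⟨hmem2, h2, h3⟩, _⟩ := hPt _ hmem
    exact hmax _ hmem2 (htle.trans h2) (h3.trans (le_of_eq hmeq))
  have h2 : P t (m t) ≤ P (P t (m t)) (m (P t (m t))) := by
    obtain ⟨_, hmax2⟩ := hPt _ hmem
    exact hmax2 _ hmem le_rfl (hle _)
  have := le_antisymm h1 h2
  convert this using 2
end
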